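/- arXiv:1702.06863 — 7 statements merged into one kernel-verified Lean document; each statement's English description precedes it below -/
import Mathlib

section
/- Let k ≥ 1, D ≥ 1 be integers, let M⁰,…,M^{D−1} be constant skew-symmetric real k×k matrices, let H : ℝ^k → ℝ be twice continuously differentiable, and let ζ : ℝ × ℝ × ℝ^D → ℝ^k, (s,r,x) ↦ ζ(s,r,x), be twice continuously differentiable and satisfy the De Donder–Weyl–Hamilton equation Σ_{μ=0}^{D−1} M^μ · ∂ζ/∂x^μ (s,r,x) = ∇H(ζ(s,r,x)) for all (s,r,x). Then the multi-symplectic structure is locally conserved along the flow: for all (s,r,x), Σ_{μ=0}^{D−1} ∂/∂x^μ ⟨ M^μ · ∂_s ζ(s,r,x), ∂_r ζ(s,r,x) ⟩ = 0, where ⟨·,·⟩ is the Euclidean inner product on ℝ^k. -/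
/-!
Differentiating the field equation `∑ μ, M^μ ∂_μ ζ = ∇H(ζ)` in a direction `w` and pairing it with
a vector `c` gives `∑ μ, ⟨M^μ ∂_w ∂_μ ζ, c⟩ = D²H(ζ)(∂_w ζ, c)`. By the product rule and the
symmetry of mixed partials, `∑ μ, ∂_μ ⟨M^μ ∂_s ζ, ∂_r ζ⟩` is
`∑ μ, ⟨M^μ ∂_s ∂_μ ζ, ∂_r ζ⟩ + ⟨M^μ ∂_s ζ, ∂_r ∂_μ ζ⟩`, and skew-symmetry of `M^μ` turns the
second term into `-⟨M^μ ∂_r ∂_μ ζ, ∂_s ζ⟩`. The sum is therefore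
`D²H(ζ)(∂_s ζ, ∂_r ζ) - D²H(ζ)(∂_r ζ, ∂_s ζ)`, which vanishes because the Hessian is symmetric.
-/

open Matrix

theorem Matrix.mulVec_dotProduct_of_transpose_eq_neg {ι R : Type*} [Fintype ι] [CommRing R]
    {A : Matrix ι ι R} (hA : Aᵀ = -A) (a b : ι → R) :
    (A *ᵥ a) ⬝ᵥ b = -((A *ᵥ b) ⬝ᵥ a) := by
  rw [dotProduct_comm, dotProduct_mulVec, ← mulVec_transpose, hA, neg_mulVec, neg_dotProduct]

theorem LinearMap.dotProduct_apply_single {ι R : Type*} [Fintype ι] [DecidableEq ι]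
    [CommSemiring R] (L : (ι → R) →ₗ[R] R) (c : ι → R) :
    (fun i => L (Pi.single i 1)) ⬝ᵥ c = L c := by
  conv_rhs => rw [pi_eq_sum_univ' c, map_sum]
  simp [dotProduct, mul_comm]

section Calculus

variable {ι E F G : Type*} [Fintype ι] [NormedAddCommGroup E] [NormedSpace ℝ E]
  [NormedAddCommGroup F] [NormedSpace ℝ F] [NormedAddCommGroup G] [NormedSpace ℝ G]
  {f g : E → ι → ℝ} {q : E}

theorem DifferentiableAt.dotProduct (hf : DifferentiableAt ℝ f q) (hg : DifferentiableAt ℝ g q) :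
    DifferentiableAt ℝ (fun q => f q ⬝ᵥ g q) q := by
  have hfi := differentiableAt_pi.1 hf
  have hgi := differentiableAt_pi.1 hg
  simp only [_root_.dotProduct]
  fun_prop

theorem fderiv_dotProduct_apply (hf : DifferentiableAt ℝ f q) (hg : DifferentiableAt ℝ g q)
    (w : E) :
    fderiv ℝ (fun q => f q ⬝ᵥ g q) q w = fderiv ℝ f q w ⬝ᵥ g q + f q ⬝ᵥ fderiv ℝ g q w := by
  have hfi := differentiableAt_pi.1 hf
  have hgi := differentiableAt_pi.1 hg
  simp only [dotProduct]
  rw [fderiv_fun_sum (u := Finset.univ) (A := fun i q => f q i * g q i)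
    fun i _ => (hfi i).fun_mul (hgi i)]
  simp [fderiv_fun_mul (hfi _) (hgi _), fderiv_apply hf, fderiv_apply hg,
    Finset.sum_add_distrib, mul_comm, add_comm]

theorem HasFDerivAt.matrix_mulVec (A : Matrix ι ι ℝ) {f' : E →L[ℝ] ι → ℝ}
    (hf : HasFDerivAt f f' q) :
    HasFDerivAt (fun q => A *ᵥ f q) ((LinearMap.toContinuousLinearMap A.mulVecLin).comp f') q :=
  (LinearMap.toContinuousLinearMap A.mulVecLin).hasFDerivAt.comp q hf

theorem DifferentiableAt.matrix_mulVec (A : Matrix ι ι ℝ) (hf : DifferentiableAt ℝ f q) :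
    DifferentiableAt ℝ (fun q => A *ᵥ f q) q :=
  (hf.hasFDerivAt.matrix_mulVec A).differentiableAt

theorem fderiv_mulVec_dotProduct_apply (A : Matrix ι ι ℝ) (hf : DifferentiableAt ℝ f q)
    (hg : DifferentiableAt ℝ g q) (w : E) :
    fderiv ℝ (fun q => (A *ᵥ f q) ⬝ᵥ g q) q w
      = (A *ᵥ fderiv ℝ f q w) ⬝ᵥ g q + (A *ᵥ f q) ⬝ᵥ fderiv ℝ g q w := by
  have hAf := hf.hasFDerivAt.matrix_mulVec A
  rw [fderiv_dotProduct_apply hAf.differentiableAt hg, hAf.fderiv]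
  simp

theorem fderiv_clm_apply_const_apply {φ : E → F →L[ℝ] G} (hφ : DifferentiableAt ℝ φ q)
    (v : F) (w : E) :
    fderiv ℝ (fun q => φ q v) q w = fderiv ℝ φ q w v := by
  simp [fderiv_clm_apply hφ (differentiableAt_const v)]

variable {ζ : E → F}

theorem ContDiff.differentiable_fderiv_apply (hζ : ContDiff ℝ 2 ζ) (v : E) :
    Differentiable ℝ (fun q => fderiv ℝ ζ q v) :=
  ((hζ.fderiv_right (m := 1) (by norm_num)).differentiable one_ne_zero).clm_apply
    (differentiable_const v)

theorem ContDiff.fderiv_fderiv_apply_comm (hζ : ContDiff ℝ 2 ζ) (q v w : E) :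
    fderiv ℝ (fun q => fderiv ℝ ζ q v) q w = fderiv ℝ (fun q => fderiv ℝ ζ q w) q v := by
  have hζ' := (hζ.fderiv_right (m := 1) (by norm_num)).differentiable one_ne_zero q
  rw [fderiv_clm_apply_const_apply hζ', fderiv_clm_apply_const_apply hζ']
  exact (hζ.contDiffAt.isSymmSndFDerivAt (by simp)) w v

end Calculus

section FieldEquation

variable {ι κ E : Type*} [Fintype ι] [DecidableEq ι] [Fintype κ]
  [NormedAddCommGroup E] [NormedSpace ℝ E]
  {M : κ → Matrix ι ι ℝ} {e : κ → E} {H : (ι → ℝ) → ℝ} {ζ : E → ι → ℝ}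

theorem sum_mulVec_fderiv_fderiv_dotProduct_eq_hessian (hH : ContDiff ℝ 2 H)
    (hζ : ContDiff ℝ 2 ζ)
    (heq : ∀ q, ∑ μ, M μ *ᵥ fderiv ℝ ζ q (e μ) = fun i => fderiv ℝ H (ζ q) (Pi.single i 1))
    (q w : E) (c : ι → ℝ) :
    ∑ μ, (M μ *ᵥ fderiv ℝ (fun q => fderiv ℝ ζ q (e μ)) q w) ⬝ᵥ c
      = fderiv ℝ (fderiv ℝ H) (ζ q) (fderiv ℝ ζ q w) c := by
  have hDζ := hζ.differentiable_fderiv_apply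
  have hDH := (hH.fderiv_right (m := 1) (by norm_num)).differentiable one_ne_zero
  have hζq := hζ.differentiable two_ne_zero q
  have hpaired : (fun q => ∑ μ, (M μ *ᵥ fderiv ℝ ζ q (e μ)) ⬝ᵥ c)
      = fun q => fderiv ℝ H (ζ q) c := by
    funext q
    rw [← sum_dotProduct, heq]
    exact (fderiv ℝ H (ζ q)).toLinearMap.dotProduct_apply_single c
  have hderiv := congrArg (fun φ => fderiv ℝ φ q w) hpaired
  rw [fderiv_fun_sum fun μ _ => (((hDζ (e μ)).differentiableAt.matrix_mulVec
      (M μ)).dotProduct (differentiableAt_const c)),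
    fderiv_clm_apply_const_apply (φ := fun q => fderiv ℝ H (ζ q)) ((hDH _).comp q hζq),
    fderiv_fun_comp q (hDH _) hζq] at hderiv
  simpa [fderiv_mulVec_dotProduct_apply _ (hDζ _).differentiableAt (differentiableAt_const c)]
    using hderiv

theorem sum_fderiv_mulVec_fderiv_dotProduct_fderiv_eq_zero (hM : ∀ μ, (M μ)ᵀ = -M μ)
    (hH : ContDiff ℝ 2 H) (hζ : ContDiff ℝ 2 ζ)
    (heq : ∀ q, ∑ μ, M μ *ᵥ fderiv ℝ ζ q (e μ) = fun i => fderiv ℝ H (ζ q) (Pi.single i 1))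
    (q s r : E) :
    ∑ μ, fderiv ℝ (fun q => (M μ *ᵥ fderiv ℝ ζ q s) ⬝ᵥ fderiv ℝ ζ q r) q (e μ) = 0 := by
  have hDζ := hζ.differentiable_fderiv_apply
  set ζs := fderiv ℝ ζ q s
  set ζr := fderiv ℝ ζ q r
  calc ∑ μ, fderiv ℝ (fun q => (M μ *ᵥ fderiv ℝ ζ q s) ⬝ᵥ fderiv ℝ ζ q r) q (e μ)
      = ∑ μ, ((M μ *ᵥ fderiv ℝ (fun q => fderiv ℝ ζ q (e μ)) q s) ⬝ᵥ ζr
          - (M μ *ᵥ fderiv ℝ (fun q => fderiv ℝ ζ q (e μ)) q r) ⬝ᵥ ζs) := by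
        refine Finset.sum_congr rfl fun μ _ => ?_
        rw [fderiv_mulVec_dotProduct_apply _ (hDζ s q) (hDζ r q),
          hζ.fderiv_fderiv_apply_comm q s, hζ.fderiv_fderiv_apply_comm q r,
          (M μ).mulVec_dotProduct_of_transpose_eq_neg (hM μ) ζs, sub_eq_add_neg]
    _ = fderiv ℝ (fderiv ℝ H) (ζ q) ζs ζr - fderiv ℝ (fderiv ℝ H) (ζ q) ζr ζs := by
        rw [Finset.sum_sub_distrib, sum_mulVec_fderiv_fderiv_dotProduct_eq_hessian hH hζ heq,
          sum_mulVec_fderiv_fderiv_dotProduct_eq_hessian hH hζ heq]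
    _ = 0 := by
        rw [(hH.contDiffAt.isSymmSndFDerivAt (by simp)).eq, sub_self]

end FieldEquation

theorem multisymplectic_structure_locally_conserved_general
    (k D : ℕ)
    (M : Fin D → Matrix (Fin k) (Fin k) ℝ)
    (hM : ∀ μ, (M μ)ᵀ = -(M μ))
    (H : (Fin k → ℝ) → ℝ) (hH : ContDiff ℝ 2 H)
    (ζ : ℝ × ℝ × (Fin D → ℝ) → (Fin k → ℝ)) (hζ : ContDiff ℝ 2 ζ)
    (heq : ∀ q : ℝ × ℝ × (Fin D → ℝ),
      ∑ μ, (M μ).mulVec (fderiv ℝ ζ q (0, 0, Pi.single μ 1))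
        = fun i => fderiv ℝ H (ζ q) (Pi.single i 1)) :
    ∀ q : ℝ × ℝ × (Fin D → ℝ),
      ∑ μ, fderiv ℝ
        (fun q' => ∑ i,
          (M μ).mulVec (fderiv ℝ ζ q' (1, 0, 0)) i * fderiv ℝ ζ q' (0, 1, 0) i)
        q (0, 0, Pi.single μ 1) = 0 := fun q =>
  sum_fderiv_mulVec_fderiv_dotProduct_fderiv_eq_zero hM hH hζ heq q (1, 0, 0) (0, 1, 0)

/-- **Local conservation of the multi-symplectic structure.**
For a Hamiltonian PDE in the abstract De Donder–Weyl–Hamilton form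
`∑ μ, M^μ · ∂ζ/∂x^μ = ∇H(ζ)` with constant skew-symmetric matrices `M^μ`,
the multi-symplectic 2-forms `ω^μ(a,b) = ⟨M^μ a, b⟩`, evaluated on the two
variation fields `∂_s ζ` and `∂_r ζ` of a two-parameter family of solutions,
satisfy `∑ μ, ∂_μ ω^μ(∂_s ζ, ∂_r ζ) = 0`. -/
theorem multisymplectic_structure_locally_conserved
    (k D : ℕ) (hk : 1 ≤ k) (hD : 1 ≤ D)
    (M : Fin D → Matrix (Fin k) (Fin k) ℝ)
    (hM : ∀ μ, (M μ)ᵀ = -(M μ))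
    (H : (Fin k → ℝ) → ℝ) (hH : ContDiff ℝ 2 H)
    (ζ : ℝ × ℝ × (Fin D → ℝ) → (Fin k → ℝ)) (hζ : ContDiff ℝ 2 ζ)
    (heq : ∀ q : ℝ × ℝ × (Fin D → ℝ),
      ∑ μ, (M μ).mulVec (fderiv ℝ ζ q (0, 0, Pi.single μ 1))
        = fun i => fderiv ℝ H (ζ q) (Pi.single i 1)) :
    ∀ q : ℝ × ℝ × (Fin D → ℝ),
      ∑ μ, fderiv ℝ
        (fun q' => ∑ i,
          (M μ).mulVec (fderiv ℝ ζ q' (1, 0, 0)) i * fderiv ℝ ζ q' (0, 1, 0) i)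
        q (0, 0, Pi.single μ 1) = 0 :=
  multisymplectic_structure_locally_conserved_general k D M hM H hH ζ hζ heq
end

section
/- Let D ≥ 1, N ≥ 1 be integers, let L : (Fin N → ℝ) × (Fin D → Fin N → ℝ) → ℝ, (u,p) ↦ L(u,p), be twice continuously differentiable, and let φ : ℝ^D → (Fin N → ℝ) be twice continuously differentiable and satisfy the Euler–Lagrange equations: for every i and every x, (∂L/∂u^i)(φ(x), Dφ(x)) = Σ_{μ=0}^{D−1} ∂/∂x^μ [ (∂L/∂p_μ^i)(φ(x), Dφ(x)) ], where Dφ(x) is the array of partial derivatives (∂_μ φ^i)(x). Define the (mixed) stress-energy tensor Θ^μ_ν(x) = δ^μ_ν · L(φ(x), Dφ(x)) − Σ_i (∂L/∂p_μ^i)(φ(x), Dφ(x)) · ∂_ν φ^i(x). Then for every ν and every x, Σ_{μ=0}^{D−1} ∂_μ Θ^μ_ν(x) = 0. -/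
/-!
Write `F = L ∘ firstJet φ` and `π^μ_i = ∂L/∂p_μ^i` along `φ`. The chain rule gives
`∂_ν F = ∑ i, ∂L/∂u^i ∂_ν φ^i + ∑ μ i, π^μ_i ∂_ν ∂_μ φ^i`, and the Leibniz rule gives
`∂_μ (π^μ_i ∂_ν φ^i) = ∂_μ π^μ_i ∂_ν φ^i + π^μ_i ∂_μ ∂_ν φ^i`. By symmetry of second derivatives the
terms in `π` cancel in `∑ μ, ∂_μ Θ^μ_ν`, which leaves the off-shell identity
`∑ μ, ∂_μ Θ^μ_ν = ∑ i, (∂L/∂u^i - ∑ μ, ∂_μ π^μ_i) ∂_ν φ^i`; its right side vanishes on solutions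
of the Euler–Lagrange equations.
-/

open ContinuousLinearMap

theorem map_prod_pi_eq_sum {R M ι κ F : Type*} [CommSemiring R] [AddCommMonoid M] [Module R M]
    [Fintype ι] [Fintype κ] [DecidableEq ι] [DecidableEq κ]
    [FunLike F ((ι → R) × (κ → ι → R)) M] [LinearMapClass F R _ M] (T : F)
    (v : ι → R) (w : κ → ι → R) :
    T (v, w) = ∑ i, v i • T (Pi.single i 1, 0)
      + ∑ ρ, ∑ i, w ρ i • T (0, Pi.single ρ (Pi.single i 1)) := by
  have hvw : ((v, w) : (ι → R) × (κ → ι → R))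
      = ∑ i, v i • (Pi.single i 1, 0) + ∑ ρ, ∑ i, w ρ i • (0, Pi.single ρ (Pi.single i 1)) := by
    ext <;> simp [Prod.fst_sum, Prod.snd_sum, Finset.sum_apply, Pi.single_apply]
  simp only [hvw, map_add, map_sum, map_smul]

section Jet

variable {ι κ : Type*} [Fintype ι] [Fintype κ] [DecidableEq κ]

noncomputable def firstJet (φ : (κ → ℝ) → ι → ℝ) (y : κ → ℝ) : (ι → ℝ) × (κ → ι → ℝ) :=
  (φ y, fun ρ j => fderiv ℝ φ y (Pi.single ρ 1) j)

theorem hasFDerivAt_firstJet {φ : (κ → ℝ) → ι → ℝ} {x : κ → ℝ}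
    (h₀ : DifferentiableAt ℝ φ x) (h₁ : DifferentiableAt ℝ (fderiv ℝ φ) x) :
    HasFDerivAt (firstJet φ) ((fderiv ℝ φ x).prod
      ((pi fun ρ => apply ℝ (ι → ℝ) (Pi.single ρ 1)).comp (fderiv ℝ (fderiv ℝ φ) x))) x :=
  h₀.hasFDerivAt.prodMk ((pi fun ρ => apply ℝ (ι → ℝ) (Pi.single ρ 1)).hasFDerivAt.comp x
    h₁.hasFDerivAt :)

end Jet

theorem hasFDerivAt_fderiv_apply_apply {E ι : Type*} [NormedAddCommGroup E] [NormedSpace ℝ E]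
    [Fintype ι] {φ : E → ι → ℝ} {x : E} (h₁ : DifferentiableAt ℝ (fderiv ℝ φ) x) (v : E) (i : ι) :
    HasFDerivAt (fun y => fderiv ℝ φ y v i)
      (((proj i).comp (apply ℝ (ι → ℝ) v)).comp (fderiv ℝ (fderiv ℝ φ) x)) x :=
  ((proj i).comp (apply ℝ (ι → ℝ) v)).hasFDerivAt.comp x h₁.hasFDerivAt

theorem fderiv_fderiv_apply_apply {E ι : Type*} [NormedAddCommGroup E] [NormedSpace ℝ E]
    [Fintype ι] {φ : E → ι → ℝ} {x : E} (h₁ : DifferentiableAt ℝ (fderiv ℝ φ) x) (v w : E) (i : ι) :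
    fderiv ℝ (fun y => fderiv ℝ φ y v i) x w = fderiv ℝ (fderiv ℝ φ) x w v i := by
  rw [(hasFDerivAt_fderiv_apply_apply h₁ v i).fderiv]
  rfl

section Lagrangian

variable {ι κ : Type*} [Fintype ι] [Fintype κ] [DecidableEq ι] [DecidableEq κ]
  {L : (ι → ℝ) × (κ → ι → ℝ) → ℝ} {φ : (κ → ℝ) → ι → ℝ} {x : κ → ℝ}

noncomputable def momentum (L : (ι → ℝ) × (κ → ι → ℝ) → ℝ) (φ : (κ → ℝ) → ι → ℝ) (μ : κ) (i : ι)
    (y : κ → ℝ) : ℝ :=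
  fderiv ℝ L (firstJet φ y) (0, Pi.single μ (Pi.single i 1))

noncomputable def stressEnergy (L : (ι → ℝ) × (κ → ι → ℝ) → ℝ) (φ : (κ → ℝ) → ι → ℝ) (μ ν : κ)
    (y : κ → ℝ) : ℝ :=
  (if μ = ν then 1 else 0) * L (firstJet φ y)
    - ∑ i, momentum L φ μ i y * fderiv ℝ φ y (Pi.single ν 1) i

theorem differentiableAt_momentum (hL : DifferentiableAt ℝ (fderiv ℝ L) (firstJet φ x))
    (h₀ : DifferentiableAt ℝ φ x) (h₁ : DifferentiableAt ℝ (fderiv ℝ φ) x) (μ : κ) (i : ι) :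
    DifferentiableAt ℝ (momentum L φ μ i) x :=
  (hL.comp x (hasFDerivAt_firstJet h₀ h₁).differentiableAt).clm_apply
    (differentiableAt_const _)

theorem fderiv_lagrangian_firstJet_apply (hL : DifferentiableAt ℝ L (firstJet φ x))
    (h₀ : DifferentiableAt ℝ φ x) (h₁ : DifferentiableAt ℝ (fderiv ℝ φ) x) (v : κ → ℝ) :
    fderiv ℝ (fun y => L (firstJet φ y)) x v
      = ∑ i, fderiv ℝ φ x v i * fderiv ℝ L (firstJet φ x) (Pi.single i 1, 0)
        + ∑ μ, ∑ i, fderiv ℝ (fderiv ℝ φ) x v (Pi.single μ 1) i * momentum L φ μ i x := by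
  have hF : HasFDerivAt (fun y => L (firstJet φ y)) ((fderiv ℝ L (firstJet φ x)).comp
      ((fderiv ℝ φ x).prod
        ((pi fun ρ => apply ℝ (ι → ℝ) (Pi.single ρ 1)).comp (fderiv ℝ (fderiv ℝ φ) x)))) x :=
    hL.hasFDerivAt.comp x (hasFDerivAt_firstJet h₀ h₁)
  rw [hF.fderiv, comp_apply, prod_apply, map_prod_pi_eq_sum]
  rfl

theorem fderiv_stressEnergy_apply (hL₀ : DifferentiableAt ℝ L (firstJet φ x))
    (hL₁ : DifferentiableAt ℝ (fderiv ℝ L) (firstJet φ x))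
    (h₀ : DifferentiableAt ℝ φ x) (h₁ : DifferentiableAt ℝ (fderiv ℝ φ) x) (μ ν : κ)
    (v : κ → ℝ) :
    fderiv ℝ (stressEnergy L φ μ ν) x v
      = (if μ = ν then 1 else 0) * fderiv ℝ (fun y => L (firstJet φ y)) x v
        - ∑ i, (momentum L φ μ i x * fderiv ℝ (fderiv ℝ φ) x v (Pi.single ν 1) i
          + fderiv ℝ φ x (Pi.single ν 1) i * fderiv ℝ (momentum L φ μ i) x v) := by
  have hF : DifferentiableAt ℝ (fun y => L (firstJet φ y)) x :=
    hL₀.comp x (hasFDerivAt_firstJet h₀ h₁).differentiableAt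
  have hπ := differentiableAt_momentum hL₁ h₀ h₁ μ
  have hdφ i := (hasFDerivAt_fderiv_apply_apply h₁ (Pi.single ν 1) i).differentiableAt
  have hterm : ∀ i ∈ Finset.univ, DifferentiableAt ℝ
      (fun y => momentum L φ μ i y * fderiv ℝ φ y (Pi.single ν 1) i) x :=
    fun i _ => (hπ i).mul (hdφ i)
  unfold stressEnergy
  rw [fderiv_fun_sub (hF.const_mul _) (.fun_sum hterm), fderiv_const_mul hF, fderiv_fun_sum hterm]
  simp only [sub_apply, smul_apply, smul_eq_mul, sum_apply, fderiv_fun_mul (hπ _) (hdφ _),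
    add_apply, fderiv_fderiv_apply_apply h₁]

theorem sum_fderiv_stressEnergy_apply (hL : ContDiffAt ℝ 2 L (firstJet φ x))
    (hφ : ContDiffAt ℝ 2 φ x) (ν : κ) :
    ∑ μ, fderiv ℝ (stressEnergy L φ μ ν) x (Pi.single μ 1)
      = ∑ i, (fderiv ℝ L (firstJet φ x) (Pi.single i 1, 0)
          - ∑ μ, fderiv ℝ (momentum L φ μ i) x (Pi.single μ 1))
        * fderiv ℝ φ x (Pi.single ν 1) i := by
  have hL₀ : DifferentiableAt ℝ L (firstJet φ x) := hL.differentiableAt two_ne_zero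
  have hL₁ : DifferentiableAt ℝ (fderiv ℝ L) (firstJet φ x) :=
    (hL.fderiv_right (m := 1) le_rfl).differentiableAt one_ne_zero
  have h₀ : DifferentiableAt ℝ φ x := hφ.differentiableAt two_ne_zero
  have h₁ : DifferentiableAt ℝ (fderiv ℝ φ) x :=
    (hφ.fderiv_right (m := 1) le_rfl).differentiableAt one_ne_zero
  have hsymm : ∀ v w, fderiv ℝ (fderiv ℝ φ) x v w = fderiv ℝ (fderiv ℝ φ) x w v :=
    hφ.isSymmSndFDerivAt (by simp)
  have hF : fderiv ℝ (fun y => L (firstJet φ y)) x (Pi.single ν 1)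
      = ∑ i, fderiv ℝ φ x (Pi.single ν 1) i * fderiv ℝ L (firstJet φ x) (Pi.single i 1, 0)
        + ∑ μ, ∑ i,
            momentum L φ μ i x * fderiv ℝ (fderiv ℝ φ) x (Pi.single μ 1) (Pi.single ν 1) i := by
    simp only [fderiv_lagrangian_firstJet_apply hL₀ h₀ h₁, hsymm (Pi.single ν 1),
      mul_comm (momentum L φ _ _ x)]
  simp only [fderiv_stressEnergy_apply hL₀ hL₁ h₀ h₁, ite_mul, one_mul, zero_mul,
    Finset.sum_sub_distrib, Finset.sum_ite_eq', Finset.mem_univ, if_true, hF,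
    Finset.sum_add_distrib, sub_mul, Finset.sum_mul]
  rw [Finset.sum_comm (γ := κ) (f := fun μ i => fderiv ℝ φ x (Pi.single ν 1) i * _)]
  simp only [mul_comm (fderiv ℝ φ x (Pi.single ν 1) _)]
  ring

end Lagrangian

theorem stress_energy_tensor_locally_conserved_general
    (D N : ℕ)
    (L : (Fin N → ℝ) × (Fin D → Fin N → ℝ) → ℝ) (hL : ContDiff ℝ 2 L)
    (φ : (Fin D → ℝ) → (Fin N → ℝ)) (hφ : ContDiff ℝ 2 φ)
    (hEL : ∀ (i : Fin N) (x : Fin D → ℝ),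
      fderiv ℝ L (φ x, fun μ j => fderiv ℝ φ x (Pi.single μ 1) j) (Pi.single i 1, 0)
        = ∑ μ, fderiv ℝ
            (fun y => fderiv ℝ L (φ y, fun ρ j => fderiv ℝ φ y (Pi.single ρ 1) j)
              (0, Pi.single μ (Pi.single i 1)))
            x (Pi.single μ 1)) :
    ∀ (ν : Fin D) (x : Fin D → ℝ),
      ∑ μ, fderiv ℝ
        (fun y =>
          (if μ = ν then (1 : ℝ) else 0)
              * L (φ y, fun ρ j => fderiv ℝ φ y (Pi.single ρ 1) j)
            - ∑ i, fderiv ℝ L (φ y, fun ρ j => fderiv ℝ φ y (Pi.single ρ 1) j)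
                (0, Pi.single μ (Pi.single i 1)) * fderiv ℝ φ y (Pi.single ν 1) i)
        x (Pi.single μ 1) = 0 := by
  intro ν x
  calc _ = ∑ i, (fderiv ℝ L (firstJet φ x) (Pi.single i 1, 0)
          - ∑ μ, fderiv ℝ (momentum L φ μ i) x (Pi.single μ 1)) * fderiv ℝ φ x (Pi.single ν 1) i :=
        sum_fderiv_stressEnergy_apply hL.contDiffAt hφ.contDiffAt ν
    _ = 0 := Finset.sum_eq_zero fun i _ => mul_eq_zero_of_left (sub_eq_zero.mpr (hEL i x)) _

/-- **Local conservation of the stress-energy tensor for a first-order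
Lagrangian field theory.**  If `φ` satisfies the Euler–Lagrange equations for
the Lagrangian density `L(u, p)` (`u` the fields, `p` their first derivatives),
then the mixed stress-energy tensor
`Θ^μ_ν = δ^μ_ν L − ∑ i (∂L/∂p_μ^i) ∂_ν φ^i` satisfies `∑ μ, ∂_μ Θ^μ_ν = 0`. -/
theorem stress_energy_tensor_locally_conserved
    (D N : ℕ) (hD : 1 ≤ D) (hN : 1 ≤ N)
    (L : (Fin N → ℝ) × (Fin D → Fin N → ℝ) → ℝ) (hL : ContDiff ℝ 2 L)
    (φ : (Fin D → ℝ) → (Fin N → ℝ)) (hφ : ContDiff ℝ 2 φ)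
    (hEL : ∀ (i : Fin N) (x : Fin D → ℝ),
      fderiv ℝ L (φ x, fun μ j => fderiv ℝ φ x (Pi.single μ 1) j) (Pi.single i 1, 0)
        = ∑ μ, fderiv ℝ
            (fun y => fderiv ℝ L (φ y, fun ρ j => fderiv ℝ φ y (Pi.single ρ 1) j)
              (0, Pi.single μ (Pi.single i 1)))
            x (Pi.single μ 1)) :
    ∀ (ν : Fin D) (x : Fin D → ℝ),
      ∑ μ, fderiv ℝ
        (fun y =>
          (if μ = ν then (1 : ℝ) else 0)
              * L (φ y, fun ρ j => fderiv ℝ φ y (Pi.single ρ 1) j)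
            - ∑ i, fderiv ℝ L (φ y, fun ρ j => fderiv ℝ φ y (Pi.single ρ 1) j)
                (0, Pi.single μ (Pi.single i 1)) * fderiv ℝ φ y (Pi.single ν 1) i)
        x (Pi.single μ 1) = 0 :=
  stress_energy_tensor_locally_conserved_general D N L hL φ hφ hEL
end

section
/- For every discrete field φ, every n ∈ ℤ and every j ∈ ZMod N, T⁰⁰₊(n,j) − T⁰⁰₋(n,j) = ((φ_{n+1}^j − φ_{n−1}^j)/δ²) · R(n,j). -/
/-- `σ_n = 1` if `n` is odd, `−1` if `n` is even. -/
def sgm (n : ℤ) : ℤ := if Odd n then 1 else -1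

/-- The two discrete energy densities `T⁰⁰_±` of the BDdV scheme
(`s = 1` gives `T⁰⁰₊`, `s = −1` gives `T⁰⁰₋`). -/
noncomputable def T00BDdV (N : ℕ) (δ : ℝ) (φ : ℤ → ZMod N → ℝ)
    (s : ℤ) (n : ℤ) (j : ZMod N) : ℝ :=
  ((φ (n + s) j - φ n j)^2 + (φ (n + s) j - φ n (j + (sgm n : ZMod N)))^2) / (2 * δ^2)
    - 1/4
    + (1/8) * (1 + (φ (n + s) j)^2)
        * (2 + (φ n j)^2 + (φ n (j + (sgm n : ZMod N)))^2)

/-- The residue `R(n,j)` of the BDdV scheme. -/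
noncomputable def Rres (N : ℕ) (δ : ℝ) (φ : ℤ → ZMod N → ℝ)
    (n : ℤ) (j : ZMod N) : ℝ :=
  (φ (n + 1) j + φ (n - 1) j)
      * (1 + (δ^2 / 8) * (2 + (φ n j)^2 + (φ n (j + (sgm n : ZMod N)))^2))
    - φ n j - φ n (j + (sgm n : ZMod N))

/-- Both densities share the site values `x = φ_n^j`, `y = φ_n^{j+σ_n}` and differ only in the
neighbour value, `a = φ_{n+1}^j` or `b = φ_{n-1}^j`; the difference then factors through
`(a - x)² - (b - x)² = (a - b) (a + b - 2x)`. -/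
theorem bdDV_density_sub_eq {K : Type*} [Field K] [CharZero K] {δ : K} (hδ : δ ≠ 0)
    (a b x y : K) :
    ((a - x)^2 + (a - y)^2) / (2 * δ^2) - 1/4 + 1/8 * (1 + a^2) * (2 + x^2 + y^2)
      - (((b - x)^2 + (b - y)^2) / (2 * δ^2) - 1/4 + 1/8 * (1 + b^2) * (2 + x^2 + y^2))
      = (a - b) / δ^2 * ((a + b) * (1 + δ^2 / 8 * (2 + x^2 + y^2)) - x - y) := by
  field_simp
  ring

theorem T00_difference_eq_residue_general
    (N : ℕ) (δ : ℝ) (hδ : 0 < δ)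
    (φ : ℤ → ZMod N → ℝ) (n : ℤ) (j : ZMod N) :
    T00BDdV N δ φ 1 n j - T00BDdV N δ φ (-1) n j
      = ((φ (n + 1) j - φ (n - 1) j) / δ^2) * Rres N δ φ n j := by
  rw [T00BDdV, T00BDdV, Rres, ← sub_eq_add_neg]
  exact bdDV_density_sub_eq hδ.ne' _ _ _ _

/-- The difference of the two discrete energy densities of the BDdV scheme is
proportional to the residue: `T⁰⁰₊ − T⁰⁰₋ = ((φ_{n+1}^j − φ_{n−1}^j)/δ²)·R`. -/
theorem T00_difference_eq_residue
    (N : ℕ) (hN : 1 ≤ N) (δ : ℝ) (hδ : 0 < δ)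
    (φ : ℤ → ZMod N → ℝ) (n : ℤ) (j : ZMod N) :
    T00BDdV N δ φ 1 n j - T00BDdV N δ φ (-1) n j
      = ((φ (n + 1) j - φ (n - 1) j) / δ^2) * Rres N δ φ n j :=
  T00_difference_eq_residue_general N δ hδ φ n j
end

section
/- For every discrete field φ and every n ∈ ℤ, Q₊(n) = Q₋(n+1), where Q_±(n) = δ·Σ_{j ∈ ZMod N} T⁰⁰_±(n,j). In other words, with periodic boundary conditions the two discrete definitions of the total energy coincide, so the total energy at each time level is unambiguously defined. -/
/-- The two discrete total energies `Q_±(n) = δ Σ_j T⁰⁰_±(n,j)`. -/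
noncomputable def QBDdV (N : ℕ) [NeZero N] (δ : ℝ) (φ : ℤ → ZMod N → ℝ)
    (s : ℤ) (n : ℤ) : ℝ :=
  δ * ∑ j : ZMod N, T00BDdV N δ φ s n j

/-!
The density `T⁰⁰_±(n,j)` is a sum of two energies of lattice links, one joining `(n±1, j)` to
`(n, j)` and one joining `(n±1, j)` to `(n, j+σ_n)`, and the link energy is symmetric in its two
endpoints. Every link between the time levels `n` and `n+1` therefore contributes once to `Q₊(n)`
and once to `Q₋(n+1)`: the vertical links at the same `j`, and the diagonal links after the
shift `j ↦ j + σ_n` of the periodic index, because `σ_{n+1} = -σ_n`.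
-/

lemma sgm_succ (n : ℤ) : sgm (n + 1) = -sgm n := by
  by_cases h : Odd n
  · simp [sgm, h, Int.not_even_iff_odd.mpr h]
  · simp [sgm, h, Int.not_odd_iff_even.mp h]

noncomputable def linkEnergy (δ x y : ℝ) : ℝ :=
  (x - y) ^ 2 / (2 * δ ^ 2) - 1 / 8 + (1 + x ^ 2) * (1 + y ^ 2) / 8

lemma linkEnergy_comm (δ x y : ℝ) : linkEnergy δ x y = linkEnergy δ y x := by
  unfold linkEnergy
  ring

lemma T00BDdV_eq_linkEnergy_add (N : ℕ) (δ : ℝ) (φ : ℤ → ZMod N → ℝ) (s n : ℤ) (j : ZMod N) :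
    T00BDdV N δ φ s n j =
      linkEnergy δ (φ (n + s) j) (φ n j) + linkEnergy δ (φ (n + s) j) (φ n (j + sgm n)) := by
  unfold T00BDdV linkEnergy
  ring

lemma Fintype.sum_comp_add_right_eq_sum_comp_sub_right {G M : Type*} [AddGroup G] [Fintype G]
    [AddCommMonoid M] (f : G → G → M) (k : G) :
    ∑ j, f j (j + k) = ∑ j, f (j - k) j :=
  Fintype.sum_equiv (Equiv.addRight k) _ _ fun j => by simp

theorem QBDdV_plus_eq_minus_succ_general
    (N : ℕ) [NeZero N] (δ : ℝ)
    (φ : ℤ → ZMod N → ℝ) (n : ℤ) :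
    QBDdV N δ φ 1 n = QBDdV N δ φ (-1) (n + 1) := by
  have hσ : ((sgm (n + 1) : ℤ) : ZMod N) = -(sgm n : ZMod N) := by
    rw [sgm_succ, Int.cast_neg]
  simp only [QBDdV, T00BDdV_eq_linkEnergy_add, Finset.sum_add_distrib, hσ, ← sub_eq_add_neg,
    add_sub_cancel_right]
  congr 2
  · exact Finset.sum_congr rfl fun j _ => linkEnergy_comm δ _ _
  · rw [Fintype.sum_comp_add_right_eq_sum_comp_sub_right
      (fun i k => linkEnergy δ (φ (n + 1) i) (φ n k))]
    exact Finset.sum_congr rfl fun j _ => linkEnergy_comm δ _ _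

/-- With periodic boundary conditions the two discrete definitions of the
total energy of the BDdV scheme coincide: `Q₊(n) = Q₋(n+1)`. -/
theorem QBDdV_plus_eq_minus_succ
    (N : ℕ) [NeZero N] (δ : ℝ) (hδ : 0 < δ)
    (φ : ℤ → ZMod N → ℝ) (n : ℤ) :
    QBDdV N δ φ 1 n = QBDdV N δ φ (-1) (n + 1) :=
  QBDdV_plus_eq_minus_succ_general N δ φ n
end

section
/- Let k ≥ 1, let M be a constant skew-symmetric real k×k matrix, δ > 0, H : ℝ^k → ℝ twice continuously differentiable, and let z : ℝ × ℝ × ℕ → ℝ^k, (s,r,n) ↦ z_n(s,r), be differentiable in (s,r) with jointly continuous derivatives, such that for all (s,r) and all n the implicit midpoint (centered box) scheme holds: M·(z_{n+1} − z_n) = δ·∇H((z_n + z_{n+1})/2). Then the discrete symplectic form ω_n(s,r) = ⟨ M·∂_s z_n(s,r), ∂_r z_n(s,r) ⟩ is independent of n: ω_{n+1}(s,r) = ω_n(s,r) for all n and all (s,r). -/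
open Matrix

/-!
Differentiating the scheme in the parameters shows that `a = ∂_s z_n` and `b = ∂_r z_n` obey the
linearized midpoint scheme `M (a' - a) = A (a + a')`, `M (b' - b) = A (b + b')`, with
`A = (δ/2) Hess H` symmetric at the midpoint. Expanding,
`⟨M (a' - a), b + b'⟩ + ⟨M (a + a'), b' - b⟩ = 2 (⟨M a', b'⟩ - ⟨M a, b⟩)`,
and the two terms on the left cancel: skew-symmetry of `M` turns the second into
`-⟨A (b + b'), a + a'⟩`, and symmetry of `A` makes this `-⟨A (a + a'), b + b'⟩`.
-/

namespace Matrix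

variable {R n : Type*} [CommRing R] [Fintype n]

theorem mulVec_dotProduct_comm_of_isSymm {A : Matrix n n R} (hA : A.IsSymm) (x y : n → R) :
    A *ᵥ x ⬝ᵥ y = A *ᵥ y ⬝ᵥ x := by
  rw [dotProduct_comm, ← dotProduct_transpose_mulVec, hA.eq, dotProduct_comm]

theorem mulVec_dotProduct_eq_neg_of_transpose_eq_neg {M : Matrix n n R} (hM : Mᵀ = -M)
    (x y : n → R) : M *ᵥ x ⬝ᵥ y = -(M *ᵥ y ⬝ᵥ x) := by
  rw [dotProduct_comm, ← dotProduct_transpose_mulVec, hM, neg_mulVec, dotProduct_neg,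
    dotProduct_comm]

theorem mulVec_dotProduct_eq_of_midpoint [NoZeroDivisors R] [CharZero R] {M A : Matrix n n R}
    (hM : Mᵀ = -M) (hA : A.IsSymm) {a a' b b' : n → R}
    (ha : M *ᵥ (a' - a) = A *ᵥ (a + a')) (hb : M *ᵥ (b' - b) = A *ᵥ (b + b')) :
    M *ᵥ a' ⬝ᵥ b' = M *ᵥ a ⬝ᵥ b := by
  have hsymm := mulVec_dotProduct_comm_of_isSymm hA (a + a') (b + b')
  have hskew := mulVec_dotProduct_eq_neg_of_transpose_eq_neg hM (a + a') (b' - b)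
  rw [← ha, ← hb] at hsymm
  have htwice : (2 : R) * (M *ᵥ a' ⬝ᵥ b' - M *ᵥ a ⬝ᵥ b) = 0 := by
    simp only [mulVec_add, mulVec_sub, add_dotProduct, sub_dotProduct, dotProduct_add,
      dotProduct_sub] at hsymm hskew
    linear_combination hsymm + hskew
  simpa [sub_eq_zero] using htwice

end Matrix

section Hessian

variable {ι : Type*} [Fintype ι] [DecidableEq ι]

/-- The index order makes `hessian H x *ᵥ u` the derivative of `∇H` along `u` without
appealing to the symmetry of second derivatives. -/
noncomputable def hessian (H : (ι → ℝ) → ℝ) (x : ι → ℝ) : Matrix ι ι ℝ :=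
  Matrix.of fun i j => fderiv ℝ (fderiv ℝ H) x (Pi.single j 1) (Pi.single i 1)

theorem hessian_mulVec (H : (ι → ℝ) → ℝ) (x u : ι → ℝ) :
    hessian H x *ᵥ u = fun i => fderiv ℝ (fderiv ℝ H) x u (Pi.single i 1) := by
  ext i
  conv_rhs => rw [pi_eq_sum_univ' u]
  simp [hessian, mulVec, dotProduct, mul_comm]

theorem hessian_isSymm {H : (ι → ℝ) → ℝ} {x : ι → ℝ} (hH : ContDiffAt ℝ 2 H x) :
    (hessian H x).IsSymm :=
  IsSymm.ext fun _ _ => hH.isSymmSndFDerivAt (by simp) _ _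

theorem hasFDerivAt_fderiv_apply_single {H : (ι → ℝ) → ℝ} {x : ι → ℝ}
    (hH : DifferentiableAt ℝ (fderiv ℝ H) x) :
    HasFDerivAt (fun y i => fderiv ℝ H y (Pi.single i 1))
      (LinearMap.toContinuousLinearMap (toLin' (hessian H x))) x := by
  refine hasFDerivAt_pi'.2 fun i => ?_
  convert hH.hasFDerivAt.clm_apply (hasFDerivAt_const (Pi.single i (1 : ℝ)) x) using 1
  ext u
  simp [hessian_mulVec]

theorem mulVec_fderiv_sub_eq_hessian_mulVec {E : Type*} [NormedAddCommGroup E]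
    [NormedSpace ℝ E] {M : Matrix ι ι ℝ} {δ : ℝ} {H : (ι → ℝ) → ℝ} {x y : E → ι → ℝ} {p : E}
    (hx : DifferentiableAt ℝ x p) (hy : DifferentiableAt ℝ y p)
    (hH : DifferentiableAt ℝ (fderiv ℝ H) ((x p + y p) / 2))
    (hstep : ∀ q, M *ᵥ (y q - x q) = δ • fun i => fderiv ℝ H ((x q + y q) / 2) (Pi.single i 1))
    (v : E) :
    M *ᵥ (fderiv ℝ y p v - fderiv ℝ x p v)
      = ((δ / 2) • hessian H ((x p + y p) / 2)) *ᵥ (fderiv ℝ x p v + fderiv ℝ y p v) := by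
  have hmid : HasFDerivAt (fun q => (x q + y q) / 2)
      ((2 : ℝ)⁻¹ • (fderiv ℝ x p + fderiv ℝ y p)) p := by
    have hsmul : (fun q => (x q + y q) / 2) = fun q => (2 : ℝ)⁻¹ • (x q + y q) := by
      ext q i
      simp [div_eq_inv_mul]
    rw [hsmul]
    exact (hx.hasFDerivAt.add hy.hasFDerivAt).const_smul (2 : ℝ)⁻¹
  have hlhs : HasFDerivAt (fun q => M *ᵥ (y q - x q))
      ((LinearMap.toContinuousLinearMap (toLin' M)).comp (fderiv ℝ y p - fderiv ℝ x p)) p :=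
    (LinearMap.toContinuousLinearMap (toLin' M)).hasFDerivAt.comp p
      (hy.hasFDerivAt.sub hx.hasFDerivAt)
  have hrhs : HasFDerivAt (fun q => M *ᵥ (y q - x q))
      (δ • (LinearMap.toContinuousLinearMap (toLin' (hessian H ((x p + y p) / 2)))).comp
        ((2 : ℝ)⁻¹ • (fderiv ℝ x p + fderiv ℝ y p))) p := by
    simp only [hstep]
    exact (HasFDerivAt.comp p (hasFDerivAt_fderiv_apply_single hH) hmid).const_smul δ
  simpa [mulVec_sub, mulVec_add, smul_mulVec, div_eq_mul_inv, mul_smul]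
    using congrArg (· v) (hlhs.unique hrhs)

end Hessian

theorem midpoint_scheme_symplectic_general
    (k : ℕ)
    (M : Matrix (Fin k) (Fin k) ℝ) (hM : Mᵀ = -M)
    (δ : ℝ)
    (H : (Fin k → ℝ) → ℝ) (hH : ContDiff ℝ 2 H)
    (z : ℝ × ℝ → ℕ → (Fin k → ℝ))
    (hz : ∀ n, ContDiff ℝ 1 (fun p => z p n))
    (hscheme : ∀ (p : ℝ × ℝ) (n : ℕ),
      M.mulVec (z p (n + 1) - z p n)
        = δ • fun i => fderiv ℝ H ((z p n + z p (n + 1)) / 2) (Pi.single i 1)) :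
    ∀ (n : ℕ) (p : ℝ × ℝ),
      (∑ i, M.mulVec (fderiv ℝ (fun q => z q (n + 1)) p (1, 0)) i
          * fderiv ℝ (fun q => z q (n + 1)) p (0, 1) i)
        = ∑ i, M.mulVec (fderiv ℝ (fun q => z q n) p (1, 0)) i
            * fderiv ℝ (fun q => z q n) p (0, 1) i := by
  intro n p
  have hzdiff : ∀ m, DifferentiableAt ℝ (fun q => z q m) p :=
    fun m => (hz m).differentiable one_ne_zero p
  have hgraddiff : Differentiable ℝ (fderiv ℝ H) :=
    (hH.fderiv_right le_rfl).differentiable one_ne_zero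
  have hvariation := mulVec_fderiv_sub_eq_hessian_mulVec (hzdiff n) (hzdiff (n + 1))
    (hgraddiff _) (fun q => hscheme q n)
  exact mulVec_dotProduct_eq_of_midpoint hM ((hessian_isSymm hH.contDiffAt).smul _)
    (hvariation (1, 0)) (hvariation (0, 1))

/-- **The implicit midpoint (centered box) scheme is a symplectic
integrator.**  For a Hamiltonian system `M ż = ∇H(z)` with `M` constant
skew-symmetric, if a two-parameter family of discrete trajectories
`z_n(s,r)` satisfies the implicit midpoint scheme
`M(z_{n+1} − z_n) = δ∇H((z_n + z_{n+1})/2)`, then the discrete symplectic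
form `ω_n = ⟨M ∂_s z_n, ∂_r z_n⟩` is independent of `n`. -/
theorem midpoint_scheme_symplectic
    (k : ℕ) (hk : 1 ≤ k)
    (M : Matrix (Fin k) (Fin k) ℝ) (hM : Mᵀ = -M)
    (δ : ℝ) (hδ : 0 < δ)
    (H : (Fin k → ℝ) → ℝ) (hH : ContDiff ℝ 2 H)
    (z : ℝ × ℝ → ℕ → (Fin k → ℝ))
    (hz : ∀ n, ContDiff ℝ 1 (fun p => z p n))
    (hscheme : ∀ (p : ℝ × ℝ) (n : ℕ),
      M.mulVec (z p (n + 1) - z p n)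
        = δ • fun i => fderiv ℝ H ((z p n + z p (n + 1)) / 2) (Pi.single i 1)) :
    ∀ (n : ℕ) (p : ℝ × ℝ),
      (∑ i, M.mulVec (fderiv ℝ (fun q => z q (n + 1)) p (1, 0)) i
          * fderiv ℝ (fun q => z q (n + 1)) p (0, 1) i)
        = ∑ i, M.mulVec (fderiv ℝ (fun q => z q n) p (1, 0)) i
            * fderiv ℝ (fun q => z q n) p (0, 1) i :=
  midpoint_scheme_symplectic_general k M hM δ H hH z hz hscheme
end

section
/- Let M⁰ and M¹ be the real 4×4 matrices M⁰ = [[0,−1,0,0],[1,0,0,0],[0,0,0,1],[0,0,−1,0]] and M¹ = [[0,0,−1,0],[0,0,0,1],[1,0,0,0],[0,−1,0,0]]. Then: (i) M⁰ and M¹ are skew-symmetric; (ii) both have characteristic polynomial (X² + 1)², so each has eigenvalues +i and −i, each with multiplicity 2, and no zero eigenvalue; (iii) det M⁰ = det M¹ = 1 ≠ 0, so both are non-degenerate; (iv) M⁰ and M¹ are linearly independent in the space of 4×4 real matrices. -/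
open Matrix Polynomial

/-- The matrix `M⁰` of the extended (non-degenerate) De Donder–Weyl–Hamilton
formulation of the non-linear wave equation in `D = 1+1` dimensions. -/
def M0 : Matrix (Fin 4) (Fin 4) ℝ :=
  !![0, -1, 0, 0; 1, 0, 0, 0; 0, 0, 0, 1; 0, 0, -1, 0]

/-- The matrix `M¹` of the extended (non-degenerate) De Donder–Weyl–Hamilton
formulation of the non-linear wave equation in `D = 1+1` dimensions. -/
def M1 : Matrix (Fin 4) (Fin 4) ℝ :=
  !![0, 0, -1, 0; 0, 0, 0, 1; 1, 0, 0, 0; 0, -1, 0, 0]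

lemma cp0 : M0.charpoly = (X ^ 2 + 1) ^ 2 := by
  simp [Matrix.charpoly, Matrix.det_succ_row_zero, Fin.sum_univ_succ,
    charmatrix_apply, M0, Fin.succAbove, Matrix.diagonal_apply]
  ring

lemma cp1 : M1.charpoly = (X ^ 2 + 1) ^ 2 := by
  simp [Matrix.charpoly, Matrix.det_succ_row_zero, Fin.sum_univ_succ,
    charmatrix_apply, M1, Fin.succAbove, Matrix.diagonal_apply]
  ring

/-- `M⁰` and `M¹` are skew-symmetric, both have characteristic polynomial
`(X² + 1)²` (eigenvalues `±i`, each of multiplicity 2, and no zero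
eigenvalue), both have determinant `1 ≠ 0` (non-degenerate), and they are
linearly independent in the space of `4 × 4` real matrices. -/
theorem M0_M1_nondegenerate_multisymplectic :
    (M0ᵀ = -M0 ∧ M1ᵀ = -M1) ∧
    (M0.charpoly = (X ^ 2 + 1) ^ 2 ∧ M1.charpoly = (X ^ 2 + 1) ^ 2) ∧
    (M0.det = 1 ∧ M1.det = 1) ∧
    LinearIndependent ℝ ![M0, M1] := by
  refine ⟨⟨?_, ?_⟩, ⟨cp0, cp1⟩, ⟨?_, ?_⟩, ?_⟩
  · ext i j; fin_cases i <;> fin_cases j <;> simp [M0, Matrix.vecHead, Matrix.vecTail]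
  · ext i j; fin_cases i <;> fin_cases j <;> simp [M1, Matrix.vecHead, Matrix.vecTail]
  · simp [M0, Matrix.det_succ_row_zero, Fin.sum_univ_succ, Fin.succAbove,
      Matrix.diagonal_apply, Fin.ext_iff]
  · simp [M1, Matrix.det_succ_row_zero, Fin.sum_univ_succ, Fin.succAbove,
      Matrix.diagonal_apply, Fin.ext_iff]
  · rw [LinearIndependent.pair_iff]
    intro s t h
    have h1 := congrFun (congrFun h 0) 1
    have h2 := congrFun (congrFun h 0) 2
    simp [M0, M1] at h1 h2
    constructor <;> linarith
end

section
/- Let D ≥ 1 and i ≥ 1 be integers. For m ∈ ℕ and a function f : (Fin m → Fin D) → ℝ, define its antisymmetrization by (Alt f)(μ) = (1/m!)·Σ_{p ∈ Perm(Fin m)} sign(p)·f(μ∘p). Let T : Fin D → ((Fin (2i) → Fin D) → ℝ) be such that each T(ν) is antisymmetric: T(ν)(μ∘p) = sign(p)·T(ν)(μ) for every permutation p of Fin (2i) and every μ. Define B : (Fin (2i+1) → Fin D) → ℝ by B(μ) = T(μ(0))(μ(1), …, μ(2i)). Then for every μ : Fin (2i+1) → Fin D, (2i+1)·(Alt B)(μ)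 = B(μ) − 2i·(Alt C_{μ(0)})(μ(1), …, μ(2i)), where C_{μ(0)} : (Fin (2i) → Fin D) → ℝ is defined by C_{μ(0)}(ν) = T(ν(0))(μ(0), ν(1), …, ν(2i−1)). -/
/-- Antisymmetrization of a function of `m` indices:
`(Alt f)(μ) = (1/m!) Σ_{p ∈ Perm(Fin m)} sign(p) f(μ ∘ p)`. -/
noncomputable def alt (m D : ℕ) (f : (Fin m → Fin D) → ℝ)
    (μ : Fin m → Fin D) : ℝ :=
  (1 / (Nat.factorial m) : ℝ)
    * ∑ p : Equiv.Perm (Fin m), ((Equiv.Perm.sign p : ℤ) : ℝ) * f (μ ∘ p)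

/-!
Split the permutations `p` of `Fin (2i+1)` according to `p 0` (`Equiv.Perm.decomposeFin`).
Those fixing `0` contribute `B(μ)` each, by antisymmetry of `T`; those with `p 0 = k+1` factor
through the transposition `(0 k+1)` and contribute `-T(μ_{k+1})` evaluated at `μ₁ … μ₂ᵢ` with
`μ₀` in slot `k`. On the other side antisymmetry absorbs the sign of every term of
`Alt C_{μ₀}`, leaving a sum of `G(σ 0)` over permutations `σ`, in which each value is attained
`(2i-1)!` times.
-/

open Equiv Finset Nat

theorem card_smul_sum_perm_apply {ι M : Type*} [Fintype ι] [DecidableEq ι] [AddCommMonoid M]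
    (G : ι → M) (z : ι) :
    Fintype.card ι • ∑ σ : Perm ι, G (σ z) = (Fintype.card ι)! • ∑ k, G k := by
  have hz : ∀ z', ∑ σ : Perm ι, G (σ z') = ∑ σ : Perm ι, G (σ z) := fun z' =>
    Fintype.sum_equiv (Equiv.mulRight (swap z' z)) _ _ fun σ => by simp
  calc Fintype.card ι • ∑ σ : Perm ι, G (σ z)
      = ∑ z', ∑ σ : Perm ι, G (σ z') := by simp [hz]
    _ = ∑ σ : Perm ι, ∑ k, G k := by
      rw [sum_comm]; exact sum_congr rfl fun σ _ => Equiv.sum_comp σ G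
    _ = (Fintype.card ι)! • ∑ k, G k := by simp [Fintype.card_perm]

section Antisymmetric

variable {R α : Type*} [CommRing R]

theorem sign_mul_comp_perm_of_antisymm {ι : Type*} [Fintype ι] [DecidableEq ι]
    {f : (ι → α) → R}
    (hf : ∀ (σ : Perm ι) (μ : ι → α), f (μ ∘ σ) = (Perm.sign σ : ℤ) * f μ)
    (σ : Perm ι) (μ : ι → α) : ((Perm.sign σ : ℤ) : R) * f (μ ∘ σ) = f μ := by
  rw [hf, ← mul_assoc, ← Int.cast_mul, ← Units.val_mul, Int.units_mul_self, Units.val_one,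
    Int.cast_one, one_mul]

theorem comp_swap_zero_succ {n : ℕ} (μ : Fin (n + 1) → α) (k : Fin n) :
    (fun l => μ (swap 0 k.succ l.succ)) = Function.update (fun l => μ l.succ) k (μ 0) := by
  funext l
  rcases eq_or_ne l k with rfl | hl
  · simp
  · rw [swap_apply_of_ne_of_ne (Fin.succ_ne_zero l) (Fin.succ_injective _ |>.ne hl),
      Function.update_of_ne hl]

variable {n : ℕ} {T : α → (Fin n → α) → R}
  (hT : ∀ x (σ : Perm (Fin n)) μ, T x (μ ∘ σ) = (Perm.sign σ : ℤ) * T x μ)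
include hT

theorem sum_perm_fin_succ_sign_mul (μ : Fin (n + 1) → α) :
    ∑ p : Perm (Fin (n + 1)), ((Perm.sign p : ℤ) : R) * T (μ (p 0)) (fun l => μ (p l.succ))
      = n ! * (T (μ 0) (fun l => μ l.succ)
          - ∑ k : Fin n, T (μ k.succ) (Function.update (fun l => μ l.succ) k (μ 0))) := by
  have hfiber : ∀ j q, ((Perm.sign (Perm.decomposeFin.symm (j, q)) : ℤ) : R)
      * T (μ (Perm.decomposeFin.symm (j, q) 0))
          (fun l => μ (Perm.decomposeFin.symm (j, q) l.succ))
      = (if j = 0 then 1 else -1) * T (μ j) (fun l => μ (swap 0 j l.succ)) := by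
    intro j q
    have hq := sign_mul_comp_perm_of_antisymm (hT (μ j)) q (fun l => μ (swap 0 j l.succ))
    simp only [Perm.decomposeFin.symm_sign, Perm.decomposeFin_symm_apply_zero,
      Perm.decomposeFin_symm_apply_succ, Units.val_mul, Int.cast_mul, mul_assoc]
    rw [← hq]
    split_ifs <;> simp [Function.comp_def]
  rw [← Perm.decomposeFin.symm.sum_comp, Fintype.sum_prod_type]
  simp only [hfiber, sum_const, Finset.card_univ, Fintype.card_perm, Fintype.card_fin,
    nsmul_eq_mul]
  rw [Fin.sum_univ_succ]
  simp [comp_swap_zero_succ, mul_sub, mul_sum, ← sub_eq_add_neg]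

theorem sign_mul_update_comp_perm (ν : Fin n → α) (x : α) (z : Fin n) (σ : Perm (Fin n)) :
    ((Perm.sign σ : ℤ) : R) * T (ν (σ z)) (Function.update (ν ∘ σ) z x)
      = T (ν (σ z)) (Function.update ν (σ z) x) := by
  rw [← sign_mul_comp_perm_of_antisymm (hT _) σ (Function.update ν (σ z) x),
    Function.update_comp_equiv, σ.symm_apply_apply]

end Antisymmetric

section Alt

variable {n D : ℕ} {T : Fin D → (Fin n → Fin D) → ℝ}
  (hT : ∀ x (σ : Perm (Fin n)) μ, T x (μ ∘ σ) = (Perm.sign σ : ℤ) * T x μ)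
include hT

theorem card_mul_alt_apply_zero (μ : Fin (n + 1) → Fin D) :
    (n + 1 : ℝ) * alt (n + 1) D (fun ν => T (ν 0) (fun l => ν l.succ)) μ
      = T (μ 0) (fun l => μ l.succ)
          - ∑ k : Fin n, T (μ k.succ) (Function.update (fun l => μ l.succ) k (μ 0)) := by
  simp only [alt, Function.comp_apply, sum_perm_fin_succ_sign_mul hT, factorial_succ]
  push_cast
  field_simp

theorem card_mul_alt_update (ν : Fin n → Fin D) (x : Fin D) (z : Fin n) :
    (n : ℝ) * alt n D (fun ν => T (ν z) (Function.update ν z x)) ν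
      = ∑ k, T (ν k) (Function.update ν k x) := by
  have hsum := card_smul_sum_perm_apply (fun k => T (ν k) (Function.update ν k x)) z
  simp only [Fintype.card_fin, nsmul_eq_mul] at hsum
  simp only [alt, Function.comp_apply, sign_mul_update_comp_perm hT]
  rw [mul_left_comm, hsum, ← mul_assoc, one_div_mul_cancel (by positivity), one_mul]

end Alt

/-- **The index antisymmetrization identity**
`(2i+1)·∂^{[μ₀}Φ^{μ₁⋯μ₂ᵢ]} = ∂^{μ₀}Φ^{μ₁⋯μ₂ᵢ} − 2i·∂^{[μ₁}Φ^{|μ₀|μ₂⋯μ₂ᵢ]}`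
for a totally antisymmetric tensor `Φ` with `2i` indices, here abstracted as
a family `T` with `T ν` the antisymmetric function of the `2i` tensor
indices (`ν` the derivative index), `B(μ) = T(μ₀)(μ₁,…,μ₂ᵢ)` and
`C_{μ₀}(ν) = T(ν₀)(μ₀,ν₁,…,ν_{2i−1})`. -/
theorem antisymmetrization_identity
    (D i : ℕ) (hi : 1 ≤ i)
    (T : Fin D → ((Fin (2 * i) → Fin D) → ℝ))
    (hT : ∀ (ν : Fin D) (p : Equiv.Perm (Fin (2 * i))) (μ : Fin (2 * i) → Fin D),
      T ν (μ ∘ p) = ((Equiv.Perm.sign p : ℤ) : ℝ) * T ν μ) :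
    ∀ μ : Fin (2 * i + 1) → Fin D,
      (2 * i + 1 : ℝ)
          * alt (2 * i + 1) D (fun ν => T (ν 0) (fun l => ν l.succ)) μ
        = T (μ 0) (fun l => μ l.succ)
          - (2 * i : ℝ)
              * alt (2 * i) D
                  (fun ν => T (ν ⟨0, by omega⟩)
                    (Function.update ν (⟨0, by omega⟩ : Fin (2 * i)) (μ 0)))
                  (fun l => μ l.succ) := by
  intro μ
  have hlhs := card_mul_alt_apply_zero hT μ
  have hrhs := card_mul_alt_update hT (fun l => μ l.succ) (μ 0) ⟨0, by omega⟩
  push_cast at hlhs hrhs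
  rw [hlhs, hrhs]
end
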